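/- Converse bound on excess distortion probability: Let W, T, H be finite random variables with joint distribution P_W(w)P_{T|W}(t|w)P_{H|T}(h|t), where T takes values in a set of cardinality at most 2^{bn}. Let d(w,h) be a distortion function, d a distortion level, ε the excess distortion probability (so P[d(W,H) > d] ≤ ε), λ > 0, and let j(w,h) := ι*(w;h) + λ(d(w,h) − d), where ι*(w;h) = log(P*_{H|W}(h|w)/P*_H(h)) is the information density of some auxiliary joint distribution P*_{WH} with marginal P_W satisfying: P*_{H|W}(h|w) > 0 whenever P_{H|T}(h|t)P_{T|W}(t|w) > 0 for some t. Then for every γ ≥ 0, P[j(W,H) ≥ bn·log 2 + γ] ≤ ε + e^{−γ} (in particular ε ≥ sup_{γ≥0}{P[j(W,H) ≥ bn·log2 + γ] − e^{−γ}}). -/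

import Mathlib

open scoped BigOperators

/-- converse bound on the excess distortion probability. For a joint
distribution P_W(w)P_{T|W}(t|w)P_{H|T}(h|t) with |T-space| ≤ 2^{bn}, distortion δ with
excess probability P[δ(W,H) > d] ≤ ε, λ > 0, and tilted information
j(w,h) = log(P*_{H|W}(h|w)/P*_H(h)) + λ(δ(w,h) − d) built from an auxiliary conditional
distribution P*_{H|W} (positive wherever a hypothesis is reachable) with H-marginal P*_H:
for every γ ≥ 0, P[j(W,H) ≥ bn·log 2 + γ] ≤ ε + e^{−γ}. -/
theorem stmt5 {W T H : Type*} [Fintype W] [Fintype T] [Fintype H]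
    (b n : ℕ) (hcard : Fintype.card T ≤ 2 ^ (b * n))
    (pW : W → ℝ) (pTW : W → T → ℝ) (pHT : T → H → ℝ)
    (hpW0 : ∀ w, 0 ≤ pW w) (hpTW0 : ∀ w t, 0 ≤ pTW w t) (hpHT0 : ∀ t h, 0 ≤ pHT t h)
    (hpW1 : ∑ w, pW w = 1) (hpTW1 : ∀ w, ∑ t, pTW w t = 1)
    (hpHT1 : ∀ t, ∑ h, pHT t h = 1)
    (δ : W → H → ℝ) (d ε lam : ℝ) (hlam : 0 < lam)
    (pSHW : W → H → ℝ) (pSH : H → ℝ)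
    (hpS0 : ∀ w h, 0 ≤ pSHW w h) (hpS1 : ∀ w, ∑ h, pSHW w h = 1)
    (hpSH : ∀ h, pSH h = ∑ w, pW w * pSHW w h)
    (hpos : ∀ w h, (∃ t, 0 < pHT t h * pTW w t) → 0 < pSHW w h)
    (hexcess : ∑ w, ∑ t, ∑ h, pW w * pTW w t * pHT t h *
        (if d < δ w h then (1 : ℝ) else 0) ≤ ε) :
    ∀ γ : ℝ, 0 ≤ γ →
      ∑ w, ∑ t, ∑ h, pW w * pTW w t * pHT t h *
        (if (b * n : ℝ) * Real.log 2 + γ ≤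
            Real.log (pSHW w h / pSH h) + lam * (δ w h - d)
          then (1 : ℝ) else 0)
        ≤ ε + Real.exp (-γ) := by
  intro γ hγ
  have hpSH0 : ∀ h, 0 ≤ pSH h := by
    intro h
    rw [hpSH]
    exact Finset.sum_nonneg fun w _ => mul_nonneg (hpW0 w) (hpS0 w h)
  set K : ℝ := Real.exp (-γ) * (2 : ℝ)⁻¹ ^ (b * n) with hK
  have hK0 : 0 ≤ K := by positivity
  -- pointwise bound
  have key : ∀ w t h, pW w * pTW w t * pHT t h *
      (if (b * n : ℝ) * Real.log 2 + γ ≤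
          Real.log (pSHW w h / pSH h) + lam * (δ w h - d) then (1 : ℝ) else 0)
      ≤ pW w * pTW w t * pHT t h * (if d < δ w h then (1 : ℝ) else 0)
        + K * (pHT t h * (pW w * pSHW w h / pSH h)) := by
    intro w t h
    have hrhs2 : 0 ≤ K * (pHT t h * (pW w * pSHW w h / pSH h)) := by
      apply mul_nonneg hK0
      apply mul_nonneg (hpHT0 t h)
      exact div_nonneg (mul_nonneg (hpW0 w) (hpS0 w h)) (hpSH0 h)
    by_cases hj : (b * n : ℝ) * Real.log 2 + γ ≤
        Real.log (pSHW w h / pSH h) + lam * (δ w h - d)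
    · rw [if_pos hj]
      by_cases hd : d < δ w h
      · rw [if_pos hd]; linarith
      · rw [if_neg hd, mul_zero, zero_add, mul_one]
        by_cases hm : 0 < pW w * pTW w t * pHT t h
        · have hpWpos : 0 < pW w := by
            rcases (hpW0 w).lt_or_eq with h' | h'
            · exact h'
            · exfalso; rw [← h'] at hm; simp at hm
          have hpTWpos : 0 < pTW w t := by
            rcases (hpTW0 w t).lt_or_eq with h' | h'
            · exact h'
            · exfalso; rw [← h'] at hm; simp at hm
          have hpHTpos : 0 < pHT t h := by
            rcases (hpHT0 t h).lt_or_eq with h' | h'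
            · exact h'
            · exfalso; rw [← h'] at hm; simp at hm
          have hSpos : 0 < pSHW w h := hpos w h ⟨t, mul_pos hpHTpos hpTWpos⟩
          have hpSHpos : 0 < pSH h := by
            have hle : pW w * pSHW w h ≤ pSH h := by
              rw [hpSH]
              exact Finset.single_le_sum
                (fun w' _ => mul_nonneg (hpW0 w') (hpS0 w' h)) (Finset.mem_univ w)
            exact lt_of_lt_of_le (mul_pos hpWpos hSpos) hle
          have hr : 0 < pSHW w h / pSH h := div_pos hSpos hpSHpos
          have hlog : (b * n : ℝ) * Real.log 2 + γ ≤ Real.log (pSHW w h / pSH h) := by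
            have : lam * (δ w h - d) ≤ 0 := by
              apply mul_nonpos_of_nonneg_of_nonpos hlam.le
              linarith [not_lt.mp hd]
            linarith
          have hexp : Real.exp ((b * n : ℝ) * Real.log 2 + γ) ≤ pSHW w h / pSH h := by
            calc Real.exp ((b * n : ℝ) * Real.log 2 + γ)
                ≤ Real.exp (Real.log (pSHW w h / pSH h)) := Real.exp_le_exp.mpr hlog
              _ = pSHW w h / pSH h := Real.exp_log hr
          have hec : Real.exp ((b * n : ℝ) * Real.log 2 + γ)
              = (2 : ℝ) ^ (b * n) * Real.exp γ := by
            rw [Real.exp_add]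
            congr 1
            have : (b : ℝ) * (n : ℝ) = ((b * n : ℕ) : ℝ) := by push_cast; ring
            rw [this, Real.exp_nat_mul, Real.exp_log (by norm_num : (0:ℝ) < 2)]
          have h1 : 1 ≤ K * (pSHW w h / pSH h) := by
            have hKexp : K * Real.exp ((b * n : ℝ) * Real.log 2 + γ) = 1 := by
              rw [hec, hK]
              have h2 : ((2 : ℝ)⁻¹) ^ (b * n) * (2 : ℝ) ^ (b * n) = 1 := by
                rw [← mul_pow]; norm_num
              have : -γ + γ = 0 := by ring
              calc Real.exp (-γ) * (2:ℝ)⁻¹ ^ (b*n) * ((2:ℝ) ^ (b*n) * Real.exp γ)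
                  = (Real.exp (-γ) * Real.exp γ) * ((2:ℝ)⁻¹ ^ (b*n) * (2:ℝ) ^ (b*n)) := by
                    ring
                _ = 1 := by rw [← Real.exp_add, h2]; simp
            calc (1:ℝ) = K * Real.exp ((b * n : ℝ) * Real.log 2 + γ) := hKexp.symm
              _ ≤ K * (pSHW w h / pSH h) := by
                  apply mul_le_mul_of_nonneg_left hexp hK0
          have hTle : pTW w t ≤ 1 := by
            rw [← hpTW1 w]
            exact Finset.single_le_sum (fun t' _ => hpTW0 w t') (Finset.mem_univ t)
          have heq : K * (pHT t h * (pW w * pSHW w h / pSH h))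
              = pW w * pHT t h * (K * (pSHW w h / pSH h)) := by
            field_simp
          calc pW w * pTW w t * pHT t h
              ≤ pW w * 1 * pHT t h := by
                apply mul_le_mul_of_nonneg_right _ (hpHT0 t h)
                exact mul_le_mul_of_nonneg_left hTle (hpW0 w)
            _ = pW w * pHT t h * 1 := by ring
            _ ≤ pW w * pHT t h * (K * (pSHW w h / pSH h)) := by
                apply mul_le_mul_of_nonneg_left h1
                exact mul_nonneg (hpW0 w) (hpHT0 t h)
            _ = K * (pHT t h * (pW w * pSHW w h / pSH h)) := heq.symm
        · have hz : pW w * pTW w t * pHT t h = 0 := by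
            have : 0 ≤ pW w * pTW w t * pHT t h :=
              mul_nonneg (mul_nonneg (hpW0 w) (hpTW0 w t)) (hpHT0 t h)
            linarith [not_lt.mp hm]
          rw [hz]; linarith
    · rw [if_neg hj, mul_zero]
      have : 0 ≤ pW w * pTW w t * pHT t h * (if d < δ w h then (1:ℝ) else 0) := by
        apply mul_nonneg (mul_nonneg (mul_nonneg (hpW0 w) (hpTW0 w t)) (hpHT0 t h))
        split <;> norm_num
      linarith
  -- sum the pointwise bound
  calc ∑ w, ∑ t, ∑ h, pW w * pTW w t * pHT t h *
        (if (b * n : ℝ) * Real.log 2 + γ ≤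
            Real.log (pSHW w h / pSH h) + lam * (δ w h - d) then (1 : ℝ) else 0)
      ≤ ∑ w, ∑ t, ∑ h, (pW w * pTW w t * pHT t h * (if d < δ w h then (1 : ℝ) else 0)
          + K * (pHT t h * (pW w * pSHW w h / pSH h))) := by
        apply Finset.sum_le_sum; intro w _
        apply Finset.sum_le_sum; intro t _
        apply Finset.sum_le_sum; intro h _
        exact key w t h
    _ = (∑ w, ∑ t, ∑ h, pW w * pTW w t * pHT t h * (if d < δ w h then (1 : ℝ) else 0))
        + ∑ w, ∑ t, ∑ h, K * (pHT t h * (pW w * pSHW w h / pSH h)) := by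
        simp [Finset.sum_add_distrib]
    _ ≤ ε + Real.exp (-γ) := by
        apply add_le_add hexcess
        have hswap : ∑ w, ∑ t, ∑ h, K * (pHT t h * (pW w * pSHW w h / pSH h))
            = ∑ t, ∑ h, K * pHT t h * (∑ w, pW w * pSHW w h / pSH h) := by
          rw [Finset.sum_comm]
          apply Finset.sum_congr rfl; intro t _
          rw [Finset.sum_comm]
          apply Finset.sum_congr rfl; intro h _
          rw [Finset.mul_sum]
          apply Finset.sum_congr rfl; intro w _
          ring
        rw [hswap]
        have hS1 : ∀ h, (∑ w, pW w * pSHW w h / pSH h) ≤ 1 := by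
          intro h
          have : (∑ w, pW w * pSHW w h / pSH h) = pSH h / pSH h := by
            rw [← Finset.sum_div, ← hpSH]
          rw [this]
          exact div_self_le_one _
        calc ∑ t, ∑ h, K * pHT t h * (∑ w, pW w * pSHW w h / pSH h)
            ≤ ∑ t : T, ∑ h, K * pHT t h := by
              apply Finset.sum_le_sum; intro t _
              apply Finset.sum_le_sum; intro h _
              have hnn : 0 ≤ K * pHT t h := mul_nonneg hK0 (hpHT0 t h)
              calc K * pHT t h * (∑ w, pW w * pSHW w h / pSH h)
                  ≤ K * pHT t h * 1 := mul_le_mul_of_nonneg_left (hS1 h) hnn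
                _ = K * pHT t h := mul_one _
          _ = ∑ t : T, K := by
              apply Finset.sum_congr rfl; intro t _
              rw [← Finset.mul_sum, hpHT1 t, mul_one]
          _ = (Fintype.card T : ℝ) * K := by
              rw [Finset.sum_const, Finset.card_univ, nsmul_eq_mul]
          _ ≤ (2 : ℝ) ^ (b * n) * K := by
              apply mul_le_mul_of_nonneg_right _ hK0
              calc (Fintype.card T : ℝ) ≤ ((2 ^ (b * n) : ℕ) : ℝ) := by
                    exact_mod_cast hcard
                _ = (2 : ℝ) ^ (b * n) := by push_cast; ring
          _ = Real.exp (-γ) := by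
              rw [hK]
              rw [show (2:ℝ) ^ (b*n) * (Real.exp (-γ) * (2:ℝ)⁻¹ ^ (b*n))
                  = Real.exp (-γ) * ((2:ℝ) * 2⁻¹) ^ (b*n) by rw [mul_pow]; ring]
              norm_num
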